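/- Let X ⊂ P^3 be the Fermat quintic defined by x_0^5 + x_1^5 + x_2^5 + x_3^5 = 0, let D_1 be the line {x_0 + x_1 = x_2 + x_3 = 0} and D_2 the line {x_0 + x_2 = x_1 + ωx_3 = 0} where ω is a primitive 5th root of unity. Then D_1 and D_2 are contained in X, are disjoint (D_1.D_2 = 0), and each meets the hyperplane section C = X ∩ {x_1^5 + x_2^5 + x_3^5 = 0 as a hyperplane section class} in degree 1; hence D = D_1 + D_2 is not 1-connected. -/

import Mathlib

open Projectivization

/-- Points of `ℙ³` over `ℂ`. -/
abbrev P3 := Projectivization ℂ (Fin 4 → ℂ)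

/-- The Fermat quintic surface `x₀⁵ + x₁⁵ + x₂⁵ + x₃⁵ = 0` in `ℙ³`. -/
def fermatQuintic : Set P3 :=
  {p | (p.rep 0) ^ 5 + (p.rep 1) ^ 5 + (p.rep 2) ^ 5 + (p.rep 3) ^ 5 = 0}

/-- The line `D₁ = {x₀ + x₁ = x₂ + x₃ = 0}`. -/
def lineD1 : Set P3 := {p | p.rep 0 + p.rep 1 = 0 ∧ p.rep 2 + p.rep 3 = 0}

/-- The line `D₂ = {x₀ + x₂ = x₁ + ω x₃ = 0}`, `ω` a primitive 5th root of 1. -/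
def lineD2 (ω : ℂ) : Set P3 := {p | p.rep 0 + p.rep 2 = 0 ∧ p.rep 1 + ω * p.rep 3 = 0}

/-- The hyperplane section `C` of the Fermat quintic cut out (on `X`) by
`x₁⁵ + x₂⁵ + x₃⁵ = 0`. -/
def sectionC : Set P3 :=
  fermatQuintic ∩ {p | (p.rep 1) ^ 5 + (p.rep 2) ^ 5 + (p.rep 3) ^ 5 = 0}

/-- For a divisor `D = D₁ + D₂` which is the sum of two distinct reduced
irreducible curves, `1`-connectedness means exactly that `D₁.D₂ ≥ 1`,
i.e. that the two components meet. -/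
def OneConnectedPair (A B : Set P3) : Prop := (A ∩ B).Nonempty

/-! On `D₁` the quintic restricts to `x₁⁵ + (-x₁)⁵ + x₃⁵ + (-x₃)⁵ = 0` because `5` is odd, and on
`D₂` to `x₃⁵ - ω⁵x₃⁵ = 0` because `ω⁵ = 1`. The four linear equations of `D₁` and `D₂` together
force `(ω - 1) x₀ = 0`, hence `x = 0` as `ω ≠ 1`, so the lines are disjoint. On `D₁` the equation
of `C` becomes `x₁⁵ = 0`, and on `D₂` it becomes `x₂⁵ = 0`; each line therefore meets `C` in the
single point `[0 : 0 : 1 : -1]`, resp. `[0 : -ω : 0 : 1]`. -/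

open scoped LinearAlgebra.Projectivization

theorem Projectivization.existsUnique_rep_of_iff_mem_span {K V : Type*} [DivisionRing K]
    [AddCommGroup V] [Module K V] (P : V → Prop) {v : V} (hv : v ≠ 0)
    (hP : ∀ w, w ≠ 0 → (P w ↔ w ∈ K ∙ v)) :
    ∃! p : ℙ K V, P p.rep := by
  refine ⟨mk K v hv, ?_, fun p hp => ?_⟩
  · obtain ⟨a, ha⟩ := exists_smul_eq_mk_rep K v hv
    rw [hP _ (rep_nonzero _), ← ha]
    exact Submodule.smul_mem _ _ (Submodule.mem_span_singleton_self v)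
  · obtain ⟨a, ha⟩ := Submodule.mem_span_singleton.1 ((hP _ p.rep_nonzero).1 hp)
    rw [← mk_rep p, mk_eq_mk_iff']
    exact ⟨a, ha⟩

section

variable (x : Fin 4 → ℂ)

theorem fermat_eq_zero_of_lineD1_eqs (h01 : x 0 + x 1 = 0) (h23 : x 2 + x 3 = 0) :
    x 0 ^ 5 + x 1 ^ 5 + x 2 ^ 5 + x 3 ^ 5 = 0 := by
  rw [eq_neg_of_add_eq_zero_left h01, eq_neg_of_add_eq_zero_left h23]
  ring

theorem fermat_eq_zero_of_lineD2_eqs {ω : ℂ} (hω : ω ^ 5 = 1) (h02 : x 0 + x 2 = 0)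
    (h13 : x 1 + ω * x 3 = 0) : x 0 ^ 5 + x 1 ^ 5 + x 2 ^ 5 + x 3 ^ 5 = 0 := by
  rw [eq_neg_of_add_eq_zero_left h02, eq_neg_of_add_eq_zero_left h13]
  linear_combination (-x 3 ^ 5) * hω

theorem eq_zero_of_lineD1_eqs_of_lineD2_eqs {ω : ℂ} (hω : ω ≠ 1) (h01 : x 0 + x 1 = 0)
    (h23 : x 2 + x 3 = 0) (h02 : x 0 + x 2 = 0) (h13 : x 1 + ω * x 3 = 0) : x = 0 := by
  have h0 : x 0 = 0 := by
    have : (ω - 1) * x 0 = 0 := by linear_combination h13 - h01 - ω * h23 + ω * h02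
    exact (mul_eq_zero.1 this).resolve_left (sub_ne_zero.2 hω)
  have h1 : x 1 = 0 := by linear_combination h01 - h0
  have h2 : x 2 = 0 := by linear_combination h02 - h0
  have h3 : x 3 = 0 := by linear_combination h23 - h02 + h0
  funext i
  fin_cases i <;> assumption

end

theorem lineD1_subset_fermatQuintic : lineD1 ⊆ fermatQuintic :=
  fun p ⟨h01, h23⟩ => fermat_eq_zero_of_lineD1_eqs p.rep h01 h23

theorem lineD2_subset_fermatQuintic {ω : ℂ} (hω : ω ^ 5 = 1) : lineD2 ω ⊆ fermatQuintic :=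
  fun p ⟨h02, h13⟩ => fermat_eq_zero_of_lineD2_eqs p.rep hω h02 h13

theorem lineD1_inter_lineD2_eq_empty {ω : ℂ} (hω : ω ≠ 1) : lineD1 ∩ lineD2 ω = ∅ :=
  Set.eq_empty_of_forall_notMem fun p ⟨⟨h01, h23⟩, h02, h13⟩ =>
    p.rep_nonzero (eq_zero_of_lineD1_eqs_of_lineD2_eqs p.rep hω h01 h23 h02 h13)

theorem existsUnique_mem_lineD1_inter_sectionC : ∃! p : P3, p ∈ lineD1 ∩ sectionC := by
  refine Projectivization.existsUnique_rep_of_iff_mem_span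
    (fun x => (x 0 + x 1 = 0 ∧ x 2 + x 3 = 0) ∧
      (x 0 ^ 5 + x 1 ^ 5 + x 2 ^ 5 + x 3 ^ 5 = 0 ∧ x 1 ^ 5 + x 2 ^ 5 + x 3 ^ 5 = 0))
    (v := ![0, 0, 1, -1]) (by simp) fun x _ => ?_
  rw [Submodule.mem_span_singleton]
  constructor
  · rintro ⟨⟨h01, h23⟩, -, hC⟩
    have h3 : x 3 = -x 2 := eq_neg_of_add_eq_zero_right h23
    have h1 : x 1 = 0 := pow_eq_zero_iff (n := 5) (by norm_num) |>.1 <| by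
      rw [h3] at hC
      linear_combination hC
    have h0 : x 0 = 0 := by linear_combination h01 - h1
    refine ⟨x 2, funext fun i => ?_⟩
    fin_cases i <;> simp [h0, h1, h3]
  · rintro ⟨t, rfl⟩
    simp only [Pi.smul_apply, smul_eq_mul, Matrix.cons_val]
    exact ⟨⟨by ring, by ring⟩, by ring, by ring⟩

theorem existsUnique_mem_lineD2_inter_sectionC {ω : ℂ} (hω : ω ^ 5 = 1) :
    ∃! p : P3, p ∈ lineD2 ω ∩ sectionC := by
  refine Projectivization.existsUnique_rep_of_iff_mem_span
    (fun x => (x 0 + x 2 = 0 ∧ x 1 + ω * x 3 = 0) ∧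
      (x 0 ^ 5 + x 1 ^ 5 + x 2 ^ 5 + x 3 ^ 5 = 0 ∧ x 1 ^ 5 + x 2 ^ 5 + x 3 ^ 5 = 0))
    (v := ![0, -ω, 0, 1]) (by simp) fun x _ => ?_
  rw [Submodule.mem_span_singleton]
  constructor
  · rintro ⟨⟨h02, h13⟩, -, hC⟩
    have h2 : x 2 = 0 := pow_eq_zero_iff (n := 5) (by norm_num) |>.1 <| by
      rw [eq_neg_of_add_eq_zero_left h13] at hC
      linear_combination hC + x 3 ^ 5 * hω
    have h0 : x 0 = 0 := by linear_combination h02 - h2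
    have h1 : x 1 = x 3 * -ω := by linear_combination h13
    refine ⟨x 3, funext fun i => ?_⟩
    fin_cases i <;> simp [h0, h1, h2]
  · rintro ⟨t, rfl⟩
    simp only [Pi.smul_apply, smul_eq_mul, Matrix.cons_val]
    exact ⟨⟨by ring, by ring⟩, by linear_combination -t ^ 5 * hω, by linear_combination -t ^ 5 * hω⟩

/-- Example 2.1: the lines `D₁ = {x₀+x₁ = x₂+x₃ = 0}` and
`D₂ = {x₀+x₂ = x₁+ωx₃ = 0}` lie on the Fermat quintic `X`, are disjoint
(`D₁.D₂ = 0`), and each meets the hyperplane section `C` in degree `1`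
(in a single point); hence the divisor `D = D₁ + D₂` is not `1`-connected. -/
theorem stmt10 (ω : ℂ) (hω : IsPrimitiveRoot ω 5) :
    lineD1 ⊆ fermatQuintic ∧ lineD2 ω ⊆ fermatQuintic ∧
    lineD1 ∩ lineD2 ω = ∅ ∧
    (∃! p : P3, p ∈ lineD1 ∩ sectionC) ∧
    (∃! p : P3, p ∈ lineD2 ω ∩ sectionC) ∧
    ¬ OneConnectedPair lineD1 (lineD2 ω) := by
  have hdisj : lineD1 ∩ lineD2 ω = ∅ := lineD1_inter_lineD2_eq_empty (hω.ne_one (by norm_num))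
  exact ⟨lineD1_subset_fermatQuintic, lineD2_subset_fermatQuintic hω.pow_eq_one, hdisj,
    existsUnique_mem_lineD1_inter_sectionC, existsUnique_mem_lineD2_inter_sectionC hω.pow_eq_one,
    Set.not_nonempty_iff_eq_empty.2 hdisj⟩
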